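/- Let α ≥ 1. Then (C(α)/(1+2α))·(1 − 1/√α) ≤ H₁(α,α), where C(α) = ∫₀^∞ t^α / sinh t dt and H₁(α,α) = ∫₀^∞ (t^α / sinh t) · α/(α² + t²) dt. -/

import Mathlib

open MeasureTheory Filter Real

/-- `C(α) = ∫₀^∞ t^α / sinh t dt`. -/
noncomputable def Cconst (α : ℝ) : ℝ :=
  ∫ t in Set.Ioi (0:ℝ), t ^ α / Real.sinh t

/-- `H₁(α,x) = ∫₀^∞ (t^α / sinh t) · x/(x²+t²) dt`. -/
noncomputable def H1fun (α x : ℝ) : ℝ :=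
  ∫ t in Set.Ioi (0:ℝ), t ^ α / Real.sinh t * (x / (x ^ 2 + t ^ 2))

/-!
With `f(t) = t^α / sinh t` we have `C(α) = ∫ f` and `∫ t² f = C(α + 2)`. Since `u ↦ 1/u` lies
above its tangent line at `v = x² + m`, `x / (x² + t²) ≥ x (2v - x² - t²) / v²`, and integrating
against `f` gives `H₁(α, x) ≥ x ((2v - x²) C(α) - C(α + 2)) / v²`. Integrating
`(t^(β+1) / sinh t)'` over `(0, ∞)` and using `cosh ≥ sinh` gives `C(β + 1) ≤ (β + 1) C(β)`, so
`C(α + 2) ≤ m C(α)` for `m = (α + 1)(α + 2)`, whence `H₁(α, x) ≥ x C(α) / (x² + m)`.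
For `x = α ≥ 1` an elementary inequality in `√α` concludes.
-/

open Set Topology

lemma two_mul_add_one_le_exp_mul_exp (t : ℝ) : 2 * t + 1 ≤ exp t * exp t := by
  rw [← exp_add, ← two_mul]
  exact add_one_le_exp _

lemma one_div_sinh_le {t : ℝ} (ht : 0 < t) : 1 / sinh t ≤ (1 / t + 2) * exp (-t) := by
  have hE : 0 < exp t := exp_pos t
  have h := two_mul_add_one_le_exp_mul_exp t
  rw [div_le_iff₀ (sinh_pos_iff.2 ht), sinh_eq, exp_neg]
  field_simp
  nlinarith [mul_pos ht hE, mul_pos hE hE]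

lemma cosh_div_sinh_le {t : ℝ} (ht : 0 < t) : cosh t / sinh t ≤ 1 + 1 / t := by
  have hE : 0 < exp t := exp_pos t
  have h := two_mul_add_one_le_exp_mul_exp t
  rw [div_le_iff₀ (sinh_pos_iff.2 ht), sinh_eq, cosh_eq, exp_neg]
  field_simp
  nlinarith [mul_pos ht hE, mul_pos hE hE]

section RpowDivSinh

variable {β : ℝ}

lemma rpow_div_sinh_nonneg {t : ℝ} (ht : 0 < t) : 0 ≤ t ^ β / sinh t :=
  div_nonneg (rpow_nonneg ht.le β) (sinh_pos_iff.2 ht).le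

lemma continuousOn_rpow_div_sinh : ContinuousOn (fun t : ℝ => t ^ β / sinh t) (Ioi 0) :=
  ((continuousOn_id.rpow_const fun _ ht => Or.inl (ne_of_gt ht)).div
    continuous_sinh.continuousOn fun _ ht => (sinh_pos_iff.2 ht).ne')

lemma rpow_div_sinh_le {t : ℝ} (ht : 0 < t) :
    t ^ β / sinh t ≤ exp (-t) * t ^ (β - 1) + 2 * (exp (-t) * t ^ (β + 1 - 1)) := by
  calc t ^ β / sinh t = t ^ β * (1 / sinh t) := by ring
    _ ≤ t ^ β * ((1 / t + 2) * exp (-t)) :=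
        mul_le_mul_of_nonneg_left (one_div_sinh_le ht) (rpow_nonneg ht.le β)
    _ = _ := by
        rw [rpow_sub ht, rpow_one, add_sub_cancel_right]
        field_simp

lemma integrableOn_rpow_div_sinh (hβ : 0 < β) :
    IntegrableOn (fun t : ℝ => t ^ β / sinh t) (Ioi 0) := by
  have hdom : IntegrableOn (fun t : ℝ =>
      exp (-t) * t ^ (β - 1) + 2 * (exp (-t) * t ^ (β + 1 - 1))) (Ioi 0) :=
    (GammaIntegral_convergent hβ).add
      ((GammaIntegral_convergent (by linarith : (0:ℝ) < β + 1)).const_mul 2)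
  refine hdom.mono' (continuousOn_rpow_div_sinh.aestronglyMeasurable measurableSet_Ioi) ?_
  filter_upwards [ae_restrict_mem measurableSet_Ioi] with t (ht : 0 < t)
  rw [norm_of_nonneg (rpow_div_sinh_nonneg ht)]
  exact rpow_div_sinh_le ht

lemma integrableOn_rpow_mul_cosh_div_sinh_sq (hβ : 0 < β) :
    IntegrableOn (fun t : ℝ => t ^ (β + 1) * cosh t / sinh t ^ 2) (Ioi 0) := by
  have hdom : IntegrableOn (fun t : ℝ => t ^ (β + 1) / sinh t + t ^ β / sinh t) (Ioi 0) :=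
    (integrableOn_rpow_div_sinh (by linarith)).add (integrableOn_rpow_div_sinh hβ)
  have hmeas : ContinuousOn (fun t : ℝ => t ^ (β + 1) * cosh t / sinh t ^ 2) (Ioi 0) :=
    ((continuousOn_id.rpow_const fun _ ht => Or.inl (ne_of_gt ht)).mul
      continuous_cosh.continuousOn).div (continuous_sinh.pow 2).continuousOn
      fun _ ht => pow_ne_zero 2 (sinh_pos_iff.2 ht).ne'
  refine hdom.mono' (hmeas.aestronglyMeasurable measurableSet_Ioi) ?_
  filter_upwards [ae_restrict_mem measurableSet_Ioi] with t (ht : 0 < t)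
  have hs : 0 < sinh t := sinh_pos_iff.2 ht
  rw [norm_of_nonneg (by positivity)]
  calc t ^ (β + 1) * cosh t / sinh t ^ 2 = t ^ (β + 1) / sinh t * (cosh t / sinh t) := by
        field_simp
    _ ≤ t ^ (β + 1) / sinh t * (1 + 1 / t) :=
        mul_le_mul_of_nonneg_left (cosh_div_sinh_le ht) (rpow_div_sinh_nonneg ht)
    _ = t ^ (β + 1) / sinh t + t ^ β / sinh t := by
        rw [rpow_add ht, rpow_one]
        field_simp

lemma tendsto_rpow_div_sinh_atTop (β : ℝ) :
    Tendsto (fun t : ℝ => t ^ β / sinh t) atTop (𝓝 0) := by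
  have hdom : Tendsto (fun t : ℝ => exp (-t) * t ^ (β - 1) + 2 * (exp (-t) * t ^ (β + 1 - 1)))
      atTop (𝓝 0) := by
    have h := (tendsto_rpow_mul_exp_neg_mul_atTop_nhds_zero (β - 1) 1 one_pos).add
      ((tendsto_rpow_mul_exp_neg_mul_atTop_nhds_zero (β + 1 - 1) 1 one_pos).const_mul 2)
    simp only [neg_mul, one_mul, mul_zero, add_zero] at h
    refine h.congr fun t => ?_
    ring
  refine squeeze_zero' ?_ ?_ hdom
  · filter_upwards [eventually_gt_atTop 0] with t ht using rpow_div_sinh_nonneg ht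
  · filter_upwards [eventually_gt_atTop 0] with t ht using rpow_div_sinh_le ht

lemma continuousWithinAt_rpow_div_sinh_zero (hβ : 1 < β) :
    ContinuousWithinAt (fun t : ℝ => t ^ β / sinh t) (Ici 0) 0 := by
  have hβ0 : β ≠ 0 := by positivity
  have hlim : Tendsto (fun t : ℝ => t ^ (β - 1)) (𝓝[Ici 0] 0) (𝓝 0) := by
    simpa [zero_rpow (sub_pos.2 hβ).ne'] using
      ((continuousAt_rpow_const 0 (β - 1) (Or.inr (sub_pos.2 hβ).le)).continuousWithinAt
        (s := Ici (0:ℝ))).tendsto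
  simp only [ContinuousWithinAt, zero_rpow hβ0, zero_div]
  refine squeeze_zero' ?_ ?_ hlim
  all_goals filter_upwards [self_mem_nhdsWithin] with t (ht : 0 ≤ t)
  all_goals rcases ht.eq_or_lt with rfl | ht
  · simp [zero_rpow hβ0]
  · exact rpow_div_sinh_nonneg ht
  · simp [zero_rpow hβ0, zero_rpow (sub_pos.2 hβ).ne']
  · calc t ^ β / sinh t ≤ t ^ β / t :=
          div_le_div_of_nonneg_left (rpow_nonneg ht.le _) ht (self_lt_sinh_iff.2 ht).le
      _ = t ^ (β - 1) := by rw [rpow_sub_one ht.ne']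

lemma integral_rpow_mul_cosh_div_sinh_sq (hβ : 0 < β) :
    ∫ t in Ioi (0:ℝ), t ^ (β + 1) * cosh t / sinh t ^ 2 = (β + 1) * Cconst β := by
  have hderiv : ∀ t ∈ Ioi (0:ℝ), HasDerivAt (fun t => t ^ (β + 1) / sinh t)
      ((β + 1) * (t ^ β / sinh t) - t ^ (β + 1) * cosh t / sinh t ^ 2) t := by
    intro t (ht : 0 < t)
    have hpow : HasDerivAt (fun t : ℝ => t ^ (β + 1)) ((β + 1) * t ^ β) t := by
      simpa using hasDerivAt_rpow_const (x := t) (p := β + 1) (Or.inl ht.ne')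
    refine (hpow.div (hasDerivAt_sinh t) (sinh_pos_iff.2 ht).ne').congr_deriv ?_
    field_simp
  have hint := integrableOn_rpow_div_sinh hβ
  have key := integral_Ioi_of_hasDerivAt_of_tendsto
    (continuousWithinAt_rpow_div_sinh_zero (by linarith)) hderiv
    ((hint.const_mul (β + 1)).sub (integrableOn_rpow_mul_cosh_div_sinh_sq hβ))
    (tendsto_rpow_div_sinh_atTop (β + 1))
  rw [integral_sub (hint.const_mul (β + 1)) (integrableOn_rpow_mul_cosh_div_sinh_sq hβ),
    integral_const_mul, zero_rpow (by linarith), zero_div, sub_zero, sub_eq_zero] at key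
  rw [Cconst, key]

end RpowDivSinh

lemma Cconst_nonneg (β : ℝ) : 0 ≤ Cconst β :=
  setIntegral_nonneg measurableSet_Ioi fun _ ht => rpow_div_sinh_nonneg ht

lemma Cconst_add_one_le {β : ℝ} (hβ : 0 < β) : Cconst (β + 1) ≤ (β + 1) * Cconst β := by
  rw [← integral_rpow_mul_cosh_div_sinh_sq hβ]
  refine setIntegral_mono_on (integrableOn_rpow_div_sinh (by linarith))
    (integrableOn_rpow_mul_cosh_div_sinh_sq hβ) measurableSet_Ioi fun t (ht : 0 < t) => ?_
  have hs : 0 < sinh t := sinh_pos_iff.2 ht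
  rw [div_le_div_iff₀ hs (by positivity), mul_assoc, sq]
  exact mul_le_mul_of_nonneg_left
    (mul_le_mul_of_nonneg_right (sinh_lt_cosh t).le hs.le) (rpow_nonneg ht.le _)

lemma Cconst_add_two_le {β : ℝ} (hβ : 0 < β) :
    Cconst (β + 2) ≤ (β + 1) * (β + 2) * Cconst β := by
  have h2 := Cconst_add_one_le (by linarith : 0 < β + 1)
  rw [add_assoc, one_add_one_eq_two] at h2
  calc Cconst (β + 2) ≤ (β + 2) * Cconst (β + 1) := h2
    _ ≤ (β + 2) * ((β + 1) * Cconst β) :=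
        mul_le_mul_of_nonneg_left (Cconst_add_one_le hβ) (by linarith)
    _ = (β + 1) * (β + 2) * Cconst β := by ring

lemma two_div_sub_div_sq_le_one_div {u v : ℝ} (hu : 0 < u) (hv : 0 < v) :
    2 / v - u / v ^ 2 ≤ 1 / u := by
  rw [div_sub_div _ _ hv.ne' (pow_pos hv 2).ne', div_le_div_iff₀ (by positivity) hu]
  nlinarith [sq_nonneg (v - u)]

lemma mul_Cconst_div_le_H1fun {α x : ℝ} (hα : 0 < α) (hx : 0 < x) :
    x * Cconst α / (x ^ 2 + (α + 1) * (α + 2)) ≤ H1fun α x := by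
  set m := (α + 1) * (α + 2)
  set v := x ^ 2 + m
  have hv : 0 < v := by positivity
  have hf := integrableOn_rpow_div_sinh hα
  have hf2 := integrableOn_rpow_div_sinh (by linarith : 0 < α + 2)
  have hweight : ContinuousOn (fun t : ℝ => x / (x ^ 2 + t ^ 2)) (Ioi 0) :=
    continuousOn_const.div (by fun_prop) fun t _ => by positivity
  have hH : IntegrableOn (fun t : ℝ => t ^ α / sinh t * (x / (x ^ 2 + t ^ 2))) (Ioi 0) := by
    refine (hf.mul_const (1 / x)).mono'
      ((continuousOn_rpow_div_sinh.mul hweight).aestronglyMeasurable measurableSet_Ioi) ?_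
    filter_upwards [ae_restrict_mem measurableSet_Ioi] with t (ht : 0 < t)
    rw [norm_of_nonneg (mul_nonneg (rpow_div_sinh_nonneg ht) (by positivity))]
    refine mul_le_mul_of_nonneg_left ?_ (rpow_div_sinh_nonneg ht)
    rw [div_le_div_iff₀ (by positivity) hx]
    nlinarith [sq_nonneg t]
  have hlower : x * (2 * v - x ^ 2) / v ^ 2 * Cconst α - x / v ^ 2 * Cconst (α + 2)
      ≤ H1fun α x := by
    rw [Cconst, Cconst, ← integral_const_mul, ← integral_const_mul,
      ← integral_sub (hf.const_mul _) (hf2.const_mul _)]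
    refine setIntegral_mono_on ((hf.const_mul _).sub (hf2.const_mul _)) hH measurableSet_Ioi
      fun t (ht : 0 < t) => ?_
    have htan := mul_le_mul_of_nonneg_left
      (two_div_sub_div_sq_le_one_div (by positivity : 0 < x ^ 2 + t ^ 2) hv) hx.le
    rw [rpow_add ht, rpow_two]
    calc x * (2 * v - x ^ 2) / v ^ 2 * (t ^ α / sinh t) - x / v ^ 2 * (t ^ α * t ^ 2 / sinh t)
        = t ^ α / sinh t * (x * (2 / v - (x ^ 2 + t ^ 2) / v ^ 2)) := by
          field_simp
          ring
      _ ≤ t ^ α / sinh t * (x * (1 / (x ^ 2 + t ^ 2))) :=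
          mul_le_mul_of_nonneg_left htan (rpow_div_sinh_nonneg ht)
      _ = _ := by ring
  have hm := Cconst_add_two_le hα
  calc x * Cconst α / v
        = x * (2 * v - x ^ 2) / v ^ 2 * Cconst α - x / v ^ 2 * (m * Cconst α) := by
        field_simp
        ring
    _ ≤ x * (2 * v - x ^ 2) / v ^ 2 * Cconst α - x / v ^ 2 * Cconst (α + 2) := by
        gcongr
    _ ≤ H1fun α x := hlower

lemma one_sub_one_div_sqrt_div_le {α : ℝ} (hα : 1 ≤ α) :
    (1 - 1 / √α) / (1 + 2 * α) ≤ α / (α ^ 2 + (α + 1) * (α + 2)) := by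
  obtain ⟨s, hs, rfl⟩ : ∃ s, 1 ≤ s ∧ α = s ^ 2 :=
    ⟨√α, one_le_sqrt.2 hα, (sq_sqrt (by linarith)).symm⟩
  rw [sqrt_sq (by linarith), one_sub_div (by positivity : s ≠ 0), div_div,
    div_le_div_iff₀ (by positivity) (by positivity)]
  nlinarith [pow_le_pow_left₀ zero_le_one hs 3, mul_nonneg (sub_nonneg.2 hs) (sq_nonneg s)]

theorem stmt_10 (α : ℝ) (hα : 1 ≤ α) :
    (Cconst α / (1 + 2 * α)) * (1 - 1 / Real.sqrt α) ≤ H1fun α α := by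
  calc Cconst α / (1 + 2 * α) * (1 - 1 / √α)
      = Cconst α * ((1 - 1 / √α) / (1 + 2 * α)) := by ring
    _ ≤ Cconst α * (α / (α ^ 2 + (α + 1) * (α + 2))) :=
        mul_le_mul_of_nonneg_left (one_sub_one_div_sqrt_div_le hα) (Cconst_nonneg α)
    _ = α * Cconst α / (α ^ 2 + (α + 1) * (α + 2)) := by ring
    _ ≤ H1fun α α := mul_Cconst_div_le_H1fun (by linarith) (by linarith)
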